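/- arXiv:2205.02329 — 3 statements merged into one kernel-verified Lean document; each statement's English description precedes it below -/
import Mathlib

section
/- Let k : ℝ^m × ℝ^n → ℝ^m be twice continuously differentiable and let z : ℝ^n → ℝ^m be twice differentiable at a point p₀ such that k(z(p), p) = 0 for all p ∈ ℝ^n. Suppose the partial Fréchet derivative A := D_z k(z(p₀), p₀) is invertible. Then for all directions u, v ∈ ℝ^n, the second derivative of z at p₀ satisfies D²z(p₀)[u, v] = −A⁻¹ ( D²k(z(p₀), p₀)[ (Dz(p₀)u, u), (Dz(p₀)v, v) ] ), where D²k(z(p₀), p₀) is the second Fréchet derivative of k regarded as a bilinear map on ℝ^m × ℝ^n. -/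
open scoped Topology

/-!
Differentiating `k (z p, p) = 0` once gives `Dk(z p, p) ∘ (Dz p, id) = 0` for all `p` near `p₀`.
Differentiating this identity of operator-valued maps once more at `p₀` by the product rule gives
`Dk(z p₀, p₀) (D²z(p₀)[u, v], 0) + D²k(z p₀, p₀)[(Dz(p₀)u, u), (Dz(p₀)v, v)] = 0`, and the first
term is `A (D²z(p₀)[u, v])`.
-/

open ContinuousLinearMap

section

variable {𝕜 E F G H : Type*} [NontriviallyNormedField 𝕜]
  [NormedAddCommGroup E] [NormedSpace 𝕜 E] [NormedAddCommGroup F] [NormedSpace 𝕜 F]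
  [NormedAddCommGroup G] [NormedSpace 𝕜 G] [NormedAddCommGroup H] [NormedSpace 𝕜 H]

theorem HasFDerivAt.clm_prod_const {f : H → F →L[𝕜] E} {f' : H →L[𝕜] F →L[𝕜] E} {x : H}
    (hf : HasFDerivAt f f' x) (L : F →L[𝕜] G) :
    HasFDerivAt (fun y => (f y).prod L) ((compL 𝕜 F E (E × G) (inl 𝕜 E G)).comp f') x := by
  have hsplit : (fun y => (f y).prod L)
      = fun y => compL 𝕜 F E (E × G) (inl 𝕜 E G) (f y) + (inr 𝕜 E G).comp L := by
    funext y
    ext w <;> simp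
  rw [hsplit]
  exact ((compL 𝕜 F E (E × G) (inl 𝕜 E G)).hasFDerivAt.comp x hf).add_const _

theorem HasFDerivAt.comp_graph {k : E × F → G} {k' : E × F →L[𝕜] G} {z : F → E} {z' : F →L[𝕜] E}
    {p : F} (hk : HasFDerivAt k k' (z p, p)) (hz : HasFDerivAt z z' p) :
    HasFDerivAt (fun q => k (z q, q)) (k'.comp (z'.prod (ContinuousLinearMap.id 𝕜 F))) p :=
  hk.comp (f := fun q => (z q, q)) p (hz.prodMk (hasFDerivAt_id p))

theorem HasFDerivAt.comp_prodMk_left {k : E × F → G} {k' : E × F →L[𝕜] G} {e : E} {f : F}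
    (hk : HasFDerivAt k k' (e, f)) :
    HasFDerivAt (fun y => k (y, f)) (k'.comp (inl 𝕜 E F)) e :=
  hk.comp e (hasFDerivAt_prodMk_left e f)

theorem implicit_second_order_identity {k : E × F → G} {z : F → E} {p₀ : F}
    (hk : ContDiffAt 𝕜 2 k (z p₀, p₀))
    (hz : ∀ᶠ p in 𝓝 p₀, DifferentiableAt 𝕜 z p)
    (hz2 : DifferentiableAt 𝕜 (fderiv 𝕜 z) p₀)
    (hfix : ∀ᶠ p in 𝓝 p₀, k (z p, p) = 0) (u v : F) :
    fderiv 𝕜 k (z p₀, p₀) (fderiv 𝕜 (fderiv 𝕜 z) p₀ u v, 0)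
      + fderiv 𝕜 (fderiv 𝕜 k) (z p₀, p₀) (fderiv 𝕜 z p₀ u, u) (fderiv 𝕜 z p₀ v, v) = 0 := by
  set graphDeriv : F → F →L[𝕜] E × F := fun p => (fderiv 𝕜 z p).prod (ContinuousLinearMap.id 𝕜 F)
  have hk_near : ∀ᶠ p in 𝓝 p₀, DifferentiableAt 𝕜 k (z p, p) :=
    (hz.self_of_nhds.continuousAt.prodMk continuousAt_id).eventually
      ((hk.eventually (by simp)).mono fun _ h => h.differentiableAt two_ne_zero)
  have hDk : HasFDerivAt (fun p => fderiv 𝕜 k (z p, p))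
      ((fderiv 𝕜 (fderiv 𝕜 k) (z p₀, p₀)).comp (graphDeriv p₀)) p₀ :=
    ((hk.fderiv_right (m := 1) le_rfl).differentiableAt one_ne_zero).hasFDerivAt.comp_graph
      hz.self_of_nhds.hasFDerivAt
  have hDgraph := hz2.hasFDerivAt.clm_prod_const (ContinuousLinearMap.id 𝕜 F)
  have hzero : (fun p => (fderiv 𝕜 k (z p, p)).comp (graphDeriv p)) =ᶠ[𝓝 p₀] fun _ => 0 := by
    filter_upwards [hz, hk_near, hfix.eventually_nhds] with p hzp hkp hfixp
    rw [← (hkp.hasFDerivAt.comp_graph hzp.hasFDerivAt).fderiv]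
    exact (Filter.EventuallyEq.fderiv_eq (f := fun _ => (0 : G)) hfixp).trans
      (fderiv_const_apply 0)
  have hderiv_eq := (hDk.clm_comp hDgraph).unique
    ((hasFDerivAt_const 0 p₀).congr_of_eventuallyEq hzero)
  simpa [graphDeriv] using congr($hderiv_eq u v)

end

/-- **Second-Order Implicit Function Theorem (Theorem 2 of the paper).**
If `k : ℝ^m × ℝ^n → ℝ^m` is twice continuously differentiable, `z : ℝ^n → ℝ^m` is
twice differentiable at `p₀` (differentiable near `p₀` and with `fderiv ℝ z`
differentiable at `p₀`), `k (z p, p) = 0` for all `p`, and the partial derivative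
`A = D_z k (z p₀, p₀)` is invertible, then for all directions `u v : ℝ^n`,
`D²z(p₀)[u, v] = -A⁻¹ (D²k(z p₀, p₀)[(Dz(p₀)u, u), (Dz(p₀)v, v)])`. -/
theorem second_order_IFT {m n : ℕ}
    (k : EuclideanSpace ℝ (Fin m) × EuclideanSpace ℝ (Fin n) → EuclideanSpace ℝ (Fin m))
    (z : EuclideanSpace ℝ (Fin n) → EuclideanSpace ℝ (Fin m))
    (p₀ : EuclideanSpace ℝ (Fin n))
    (hk : ContDiff ℝ 2 k)
    (hz : ∀ᶠ p in 𝓝 p₀, DifferentiableAt ℝ z p)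
    (hz2 : DifferentiableAt ℝ (fderiv ℝ z) p₀)
    (hfix : ∀ p, k (z p, p) = 0)
    (A : EuclideanSpace ℝ (Fin m) ≃L[ℝ] EuclideanSpace ℝ (Fin m))
    (hA : (A : EuclideanSpace ℝ (Fin m) →L[ℝ] EuclideanSpace ℝ (Fin m))
        = fderiv ℝ (fun y => k (y, p₀)) (z p₀)) :
    ∀ u v : EuclideanSpace ℝ (Fin n),
      fderiv ℝ (fderiv ℝ z) p₀ u v
        = -(A.symm
            (fderiv ℝ (fderiv ℝ k) (z p₀, p₀)
              (fderiv ℝ z p₀ u, u) (fderiv ℝ z p₀ v, v))) := by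
  intro u v
  have hA_partial : ∀ w, A w = fderiv ℝ k (z p₀, p₀) (w, 0) := fun w => congr($(hA.trans
    ((hk.differentiable two_ne_zero _).hasFDerivAt.comp_prodMk_left).fderiv) w)
  rw [← map_neg, A.eq_symm_apply, eq_neg_iff_add_eq_zero, hA_partial]
  exact implicit_second_order_identity hk.contDiffAt hz hz2 (.of_forall hfix) u v
end

section
/- Let k : ℝ^m × ℝ^n → ℝ^m be twice continuously differentiable, let f : ℝ^m × ℝ^n → ℝ be twice differentiable, and let z : ℝ^n → ℝ^m be twice differentiable at p₀ with k(z(p), p) = 0 for all p ∈ ℝ^n. Suppose A := D_z k(z(p₀), p₀) is invertible, and set J := −A⁻¹ ∘ D_p k(z(p₀), p₀). Then the composite g(p) = f(z(p), p) satisfies, for all u, v ∈ ℝ^n: D²g(p₀)[u, v] = D²f(z(p₀), p₀)[ (Ju, u), (Jv, v) ] − D_z f(z(p₀), p₀)( A⁻¹ D²k(z(p₀), p₀)[ (Ju, u), (Jv, v) ] ). -/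
open scoped Topology

/-!
Differentiating `p ↦ φ (z p, p)` twice along the graph of `z` gives
`D²φ[(z' u, u), (z' v, v)] + Dφ (z''[u, v], 0)`. For `φ = k` the composite vanishes identically,
so its first and second derivatives are zero; solving these for `z'` and `z''` through the
invertible partial derivative `A` yields `z' = J` and `z''[u, v] = -A⁻¹ D²k[(J u, u), (J v, v)]`.
Substituting both into the same formula for `φ = f` gives the Hessian.
-/

open ContinuousLinearMap

section GraphComposition

variable {𝕜 E F G H : Type*} [NontriviallyNormedField 𝕜]
  [NormedAddCommGroup E] [NormedSpace 𝕜 E] [NormedAddCommGroup F] [NormedSpace 𝕜 F]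
  [NormedAddCommGroup G] [NormedSpace 𝕜 G] [NormedAddCommGroup H] [NormedSpace 𝕜 H]

theorem fderiv_comp_prodMk_left_apply {φ : F × E → G} {x : F} {q : E}
    (hφ : DifferentiableAt 𝕜 φ (x, q)) (w : F) :
    fderiv 𝕜 (fun y => φ (y, q)) x w = fderiv 𝕜 φ (x, q) (w, 0) :=
  congr($((hφ.hasFDerivAt.comp (f := fun y => (y, q)) x (hasFDerivAt_prodMk_left x q)).fderiv) w)

theorem fderiv_comp_prodMk_right_apply {φ : F × E → G} {x : F} {q : E}
    (hφ : DifferentiableAt 𝕜 φ (x, q)) (w : E) :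
    fderiv 𝕜 (fun y => φ (x, y)) q w = fderiv 𝕜 φ (x, q) (0, w) :=
  congr($((hφ.hasFDerivAt.comp (f := fun y => (x, y)) q (hasFDerivAt_prodMk_right x q)).fderiv) w)

theorem hasFDerivAt_comp_graph {φ : F × E → G} {z : E → F} {p : E}
    (hφ : DifferentiableAt 𝕜 φ (z p, p)) (hz : DifferentiableAt 𝕜 z p) :
    HasFDerivAt (fun q => φ (z q, q))
      ((fderiv 𝕜 φ (z p, p)).comp ((fderiv 𝕜 z p).prod (ContinuousLinearMap.id 𝕜 E))) p :=
  hφ.hasFDerivAt.comp (f := fun q => (z q, q)) p (hz.hasFDerivAt.prodMk (hasFDerivAt_id p))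

theorem fderiv_fderiv_comp_graph_apply {φ : F × E → G} {z : E → F} {p₀ : E}
    (hφ : Differentiable 𝕜 φ) (hφ2 : DifferentiableAt 𝕜 (fderiv 𝕜 φ) (z p₀, p₀))
    (hz : ∀ᶠ p in 𝓝 p₀, DifferentiableAt 𝕜 z p) (hz2 : DifferentiableAt 𝕜 (fderiv 𝕜 z) p₀)
    (u v : E) :
    fderiv 𝕜 (fderiv 𝕜 (fun p => φ (z p, p))) p₀ u v
      = fderiv 𝕜 (fderiv 𝕜 φ) (z p₀, p₀) (fderiv 𝕜 z p₀ u, u) (fderiv 𝕜 z p₀ v, v)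
        + fderiv 𝕜 φ (z p₀, p₀) (fderiv 𝕜 (fderiv 𝕜 z) p₀ u v, 0) := by
  set graphDeriv : E → E →L[𝕜] F × E := fun p => (fderiv 𝕜 z p).prod (ContinuousLinearMap.id 𝕜 E)
  have hgraphDeriv : HasFDerivAt graphDeriv
      ((compL 𝕜 E F (F × E) (inl 𝕜 F E)).comp (fderiv 𝕜 (fderiv 𝕜 z) p₀)) p₀ := by
    have hgraphDeriv_eq :
        graphDeriv = fun p => compL 𝕜 E F (F × E) (inl 𝕜 F E) (fderiv 𝕜 z p) + inr 𝕜 F E := by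
      funext p; ext w <;> simp [graphDeriv]
    rw [hgraphDeriv_eq]
    exact ((compL 𝕜 E F (F × E) (inl 𝕜 F E)).hasFDerivAt.comp p₀ hz2.hasFDerivAt).add_const _
  have hderiv : fderiv 𝕜 (fun p => φ (z p, p))
      =ᶠ[𝓝 p₀] fun p => (fderiv 𝕜 φ (z p, p)).comp (graphDeriv p) := by
    filter_upwards [hz] with p hp using (hasFDerivAt_comp_graph (hφ _) hp).fderiv
  have houter := hasFDerivAt_comp_graph hφ2 hz.self_of_nhds
  rw [hderiv.fderiv_eq, fderiv_clm_comp houter.differentiableAt hgraphDeriv.differentiableAt,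
    hgraphDeriv.fderiv, houter.fderiv]
  simp [graphDeriv, add_comm]

theorem fderiv_of_comp_graph_eq_zero {k : F × E → H} {z : E → F} {p₀ : E}
    (hk : DifferentiableAt 𝕜 k (z p₀, p₀)) (hz : DifferentiableAt 𝕜 z p₀)
    (hfix : ∀ p, k (z p, p) = 0) (A : F ≃L[𝕜] H)
    (hA : (A : F →L[𝕜] H) = fderiv 𝕜 (fun y => k (y, p₀)) (z p₀)) :
    fderiv 𝕜 z p₀ = -((A.symm : H →L[𝕜] F).comp (fderiv 𝕜 (fun q => k (z p₀, q)) p₀)) := by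
  ext w
  have hconst : HasFDerivAt (fun p => k (z p, p)) (0 : E →L[𝕜] H) p₀ := by
    simpa only [hfix] using hasFDerivAt_const (0 : H) p₀
  have hgraph : fderiv 𝕜 k (z p₀, p₀) (fderiv 𝕜 z p₀ w, w) = 0 :=
    congr($((hasFDerivAt_comp_graph hk hz).unique hconst) w)
  have hsplit : A (fderiv 𝕜 z p₀ w) + fderiv 𝕜 (fun q => k (z p₀, q)) p₀ w = 0 := by
    rw [← ContinuousLinearEquiv.coe_coe, hA, fderiv_comp_prodMk_left_apply hk,
      fderiv_comp_prodMk_right_apply hk, ← map_add, Prod.mk_add_mk, add_zero, zero_add, hgraph]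
  rw [neg_apply, comp_apply, ← map_neg, ContinuousLinearEquiv.coe_coe, A.eq_symm_apply]
  exact eq_neg_of_add_eq_zero_left hsplit

theorem fderiv_fderiv_apply_of_comp_graph_eq_zero {k : F × E → H} {z : E → F} {p₀ : E}
    (hk : Differentiable 𝕜 k) (hk2 : DifferentiableAt 𝕜 (fderiv 𝕜 k) (z p₀, p₀))
    (hz : ∀ᶠ p in 𝓝 p₀, DifferentiableAt 𝕜 z p) (hz2 : DifferentiableAt 𝕜 (fderiv 𝕜 z) p₀)
    (hfix : ∀ p, k (z p, p) = 0) (A : F ≃L[𝕜] H)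
    (hA : (A : F →L[𝕜] H) = fderiv 𝕜 (fun y => k (y, p₀)) (z p₀)) (u v : E) :
    fderiv 𝕜 (fderiv 𝕜 z) p₀ u v
      = -A.symm (fderiv 𝕜 (fderiv 𝕜 k) (z p₀, p₀) (fderiv 𝕜 z p₀ u, u) (fderiv 𝕜 z p₀ v, v)) := by
  have hsecond := fderiv_fderiv_comp_graph_apply hk hk2 hz hz2 u v
  simp only [hfix, fderiv_fun_const, fderiv_zero, Pi.zero_apply, zero_apply] at hsecond
  rw [← map_neg, A.eq_symm_apply, ← ContinuousLinearEquiv.coe_coe, hA,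
    fderiv_comp_prodMk_left_apply (hk _)]
  exact eq_neg_of_add_eq_zero_right hsecond.symm

end GraphComposition

/-- **Total Hessian of the upper objective (Equation (4) + Theorem 2 of the paper).**
With `k (z p, p) = 0` defining `z`, `A = D_z k (z p₀, p₀)` invertible and
`J = -A⁻¹ ∘ D_p k (z p₀, p₀)`, the composite `g p = f (z p, p)` satisfies
`D²g(p₀)[u, v] = D²f(z p₀, p₀)[(Ju, u), (Jv, v)]
  - D_z f(z p₀, p₀)(A⁻¹ D²k(z p₀, p₀)[(Ju, u), (Jv, v)])`. -/
theorem total_hessian_upper_objective {m n : ℕ}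
    (k : EuclideanSpace ℝ (Fin m) × EuclideanSpace ℝ (Fin n) → EuclideanSpace ℝ (Fin m))
    (f : EuclideanSpace ℝ (Fin m) × EuclideanSpace ℝ (Fin n) → ℝ)
    (z : EuclideanSpace ℝ (Fin n) → EuclideanSpace ℝ (Fin m))
    (p₀ : EuclideanSpace ℝ (Fin n))
    (hk : ContDiff ℝ 2 k)
    (hf : Differentiable ℝ f)
    (hf2 : Differentiable ℝ (fderiv ℝ f))
    (hz : ∀ᶠ p in 𝓝 p₀, DifferentiableAt ℝ z p)
    (hz2 : DifferentiableAt ℝ (fderiv ℝ z) p₀)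
    (hfix : ∀ p, k (z p, p) = 0)
    (A : EuclideanSpace ℝ (Fin m) ≃L[ℝ] EuclideanSpace ℝ (Fin m))
    (hA : (A : EuclideanSpace ℝ (Fin m) →L[ℝ] EuclideanSpace ℝ (Fin m))
        = fderiv ℝ (fun y => k (y, p₀)) (z p₀))
    (J : EuclideanSpace ℝ (Fin n) →L[ℝ] EuclideanSpace ℝ (Fin m))
    (hJ : J = -((A.symm : EuclideanSpace ℝ (Fin m) →L[ℝ] EuclideanSpace ℝ (Fin m)).comp
          (fderiv ℝ (fun q => k (z p₀, q)) p₀)))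
    (g : EuclideanSpace ℝ (Fin n) → ℝ)
    (hg : g = fun p => f (z p, p)) :
    ∀ u v : EuclideanSpace ℝ (Fin n),
      fderiv ℝ (fderiv ℝ g) p₀ u v
        = fderiv ℝ (fderiv ℝ f) (z p₀, p₀) (J u, u) (J v, v)
          - fderiv ℝ (fun y => f (y, p₀)) (z p₀)
              (A.symm (fderiv ℝ (fderiv ℝ k) (z p₀, p₀) (J u, u) (J v, v))) := by
  intro u v
  subst hg
  have hk1 : Differentiable ℝ k := hk.differentiable two_ne_zero
  have hk2 : Differentiable ℝ (fderiv ℝ k) :=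
    (hk.fderiv_right (m := 1) le_rfl).differentiable one_ne_zero
  have hzJ : fderiv ℝ z p₀ = J :=
    hJ ▸ fderiv_of_comp_graph_eq_zero (hk1 _) hz.self_of_nhds hfix A hA
  rw [fderiv_fderiv_comp_graph_apply hf (hf2 _) hz hz2,
    fderiv_fderiv_apply_of_comp_graph_eq_zero hk1 (hk2 _) hz hz2 hfix A hA, hzJ,
    fderiv_comp_prodMk_left_apply (hf _), ← neg_zero, ← Prod.neg_mk, map_neg, sub_eq_add_neg,
    neg_zero]
end

section
/- Let A, Ã be m×m real matrices and B, B̃ be m×n real matrices, and let δ, γ, β, R, α₁, α₂ be nonnegative reals with α₁ > 0 and α₂ > 0. Assume ‖Ã − A‖_op ≤ γδ, ‖B̃ − B‖_F ≤ βδ, ‖B‖_F ≤ R, ‖Ãv‖ ≥ α₁‖v‖ for all v ∈ ℝ^m, and ‖Av‖ ≥ α₂‖v‖ for all v ∈ ℝ^m. Then Ã and A are invertible and ‖Ã⁻¹B̃ − A⁻¹B‖_F ≤ (β/α₁)δ + (γR/(α₁α₂))δ. -/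
/-!
Since `A * A⁻¹ = 1` and `A'⁻¹ * A' = 1`,
`A'⁻¹ B' - A⁻¹ B = A'⁻¹ (B' - B) + A'⁻¹ (A - A') A⁻¹ B`.
The lower bounds make `A` and `A'` injective, hence invertible, with `‖A⁻¹ w‖ ≤ ‖w‖ / α₂` and
`‖A'⁻¹ w‖ ≤ ‖w‖ / α₁`. Finally `‖N M‖_F ≤ c ‖M‖_F` whenever `‖N v‖ ≤ c ‖v‖` for all `v`, by
applying the bound to each column of `M`; this bounds both terms.
-/

/-- Euclidean (ℓ²) norm of a vector. -/
noncomputable def euclNorm {ι : Type*} [Fintype ι] (v : ι → ℝ) : ℝ :=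
  Real.sqrt (∑ i, v i ^ 2)

/-- Frobenius norm of a real matrix. -/
noncomputable def frobNorm {ι κ : Type*} [Fintype ι] [Fintype κ] (M : Matrix ι κ ℝ) : ℝ :=
  Real.sqrt (∑ i, ∑ j, M i j ^ 2)

/-- ℓ²→ℓ² operator norm of a real matrix. -/
noncomputable def l2OpNorm {ι κ : Type*} [Fintype ι] [Fintype κ] [DecidableEq κ]
    (M : Matrix ι κ ℝ) : ℝ :=
  ‖(Matrix.toEuclideanLin M).toContinuousLinearMap‖

open Matrix

section Norms

variable {ι κ μ : Type*} [Fintype ι] [Fintype κ] [Fintype μ]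

theorem euclNorm_eq_norm (v : ι → ℝ) : euclNorm v = ‖WithLp.toLp 2 v‖ := by
  simp only [euclNorm, EuclideanSpace.norm_eq, Real.norm_eq_abs, sq_abs]

theorem euclNorm_nonneg (v : ι → ℝ) : 0 ≤ euclNorm v :=
  Real.sqrt_nonneg _

theorem euclNorm_eq_zero {v : ι → ℝ} : euclNorm v = 0 ↔ v = 0 := by
  rw [euclNorm_eq_norm, norm_eq_zero, WithLp.toLp_eq_zero]

theorem frobNorm_nonneg (M : Matrix ι κ ℝ) : 0 ≤ frobNorm M :=
  Real.sqrt_nonneg _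

theorem frobNorm_eq_sqrt_sum_euclNorm_sq (M : Matrix ι κ ℝ) :
    frobNorm M = √(∑ j, euclNorm (Mᵀ j) ^ 2) := by
  simp only [frobNorm, euclNorm, Matrix.transpose_apply,
    Real.sq_sqrt (Finset.sum_nonneg fun _ _ => sq_nonneg _)]
  rw [Finset.sum_comm]

theorem frobNorm_add_le (M N : Matrix ι κ ℝ) : frobNorm (M + N) ≤ frobNorm M + frobNorm N := by
  let _ := @Matrix.frobeniusNormedAddCommGroup ι κ ℝ _ _ _
  have frobNorm_eq_norm : ∀ X : Matrix ι κ ℝ, frobNorm X = ‖X‖ := fun X => by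
    simp only [frobNorm, Matrix.frobenius_norm_def, Real.norm_eq_abs, sq_abs, Real.sqrt_eq_rpow,
      Real.rpow_two]
  simpa only [frobNorm_eq_norm] using norm_add_le M N

theorem frobNorm_mul_le_of_euclNorm_mulVec_le {N : Matrix ι κ ℝ} {c : ℝ} (hc : 0 ≤ c)
    (hN : ∀ v, euclNorm (N *ᵥ v) ≤ c * euclNorm v) (M : Matrix κ μ ℝ) :
    frobNorm (N * M) ≤ c * frobNorm M := by
  have hcol : ∀ j, euclNorm ((N * M)ᵀ j) ^ 2 ≤ c ^ 2 * euclNorm (Mᵀ j) ^ 2 := fun j => by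
    have hcol_eq : (N * M)ᵀ j = N *ᵥ Mᵀ j := rfl
    rw [hcol_eq, ← mul_pow]
    exact pow_le_pow_left₀ (euclNorm_nonneg _) (hN _) 2
  calc frobNorm (N * M) ≤ √(∑ j, c ^ 2 * euclNorm (Mᵀ j) ^ 2) := by
        rw [frobNorm_eq_sqrt_sum_euclNorm_sq]
        exact Real.sqrt_le_sqrt (Finset.sum_le_sum fun j _ => hcol j)
    _ = c * frobNorm M := by
        rw [← Finset.mul_sum, Real.sqrt_mul (sq_nonneg c), Real.sqrt_sq hc,
          frobNorm_eq_sqrt_sum_euclNorm_sq]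

variable [DecidableEq κ]

theorem euclNorm_mulVec_le_l2OpNorm_mul (M : Matrix ι κ ℝ) (v : κ → ℝ) :
    euclNorm (M *ᵥ v) ≤ l2OpNorm M * euclNorm v := by
  rw [euclNorm_eq_norm, euclNorm_eq_norm]
  exact (toEuclideanLin M).toContinuousLinearMap.le_opNorm (WithLp.toLp 2 v)

theorem l2OpNorm_nonneg (M : Matrix ι κ ℝ) : 0 ≤ l2OpNorm M :=
  norm_nonneg _

theorem l2OpNorm_sub_comm (M N : Matrix ι κ ℝ) : l2OpNorm (M - N) = l2OpNorm (N - M) := by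
  simp only [l2OpNorm, map_sub]
  exact norm_sub_rev _ _

end Norms

section LowerBound

variable {ι : Type*} [Fintype ι] [DecidableEq ι] {A : Matrix ι ι ℝ} {α : ℝ}

theorem isUnit_of_mul_euclNorm_le_euclNorm_mulVec (hα : 0 < α)
    (hA : ∀ v, α * euclNorm v ≤ euclNorm (A *ᵥ v)) : IsUnit A := by
  refine Matrix.mulVec_injective_iff_isUnit.mp fun u v huv => ?_
  have hzero : euclNorm (u - v) = 0 := by
    have := hA (u - v)
    rw [Matrix.mulVec_sub, huv, sub_self, euclNorm_eq_zero.mpr rfl] at this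
    exact le_antisymm (nonpos_of_mul_nonpos_right this hα) (euclNorm_nonneg _)
  exact sub_eq_zero.mp (euclNorm_eq_zero.mp hzero)

theorem euclNorm_inv_mulVec_le (hα : 0 < α) (hA : ∀ v, α * euclNorm v ≤ euclNorm (A *ᵥ v))
    (w : ι → ℝ) : euclNorm (A⁻¹ *ᵥ w) ≤ α⁻¹ * euclNorm w := by
  have hdet :=
    (isUnit_iff_isUnit_det A).mp (isUnit_of_mul_euclNorm_le_euclNorm_mulVec hα hA)
  simpa only [le_inv_mul_iff₀ hα, Matrix.mulVec_mulVec, Matrix.mul_nonsing_inv _ hdet,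
    Matrix.one_mulVec] using hA (A⁻¹ *ᵥ w)

end LowerBound

theorem Matrix.inv_mul_sub_inv_mul {ι κ R : Type*} [Fintype ι] [DecidableEq ι] [CommRing R]
    {A A' : Matrix ι ι R} (hA : IsUnit A) (hA' : IsUnit A') (B B' : Matrix ι κ R) :
    A'⁻¹ * B' - A⁻¹ * B = A'⁻¹ * (B' - B) + A'⁻¹ * ((A - A') * (A⁻¹ * B)) := by
  have hA'A : A'⁻¹ * (A * (A⁻¹ * B)) = A'⁻¹ * B := by
    rw [← Matrix.mul_assoc A, Matrix.mul_nonsing_inv _ ((A.isUnit_iff_isUnit_det).mp hA),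
      Matrix.one_mul]
  have hA'A' : A'⁻¹ * (A' * (A⁻¹ * B)) = A⁻¹ * B := by
    rw [← Matrix.mul_assoc, Matrix.nonsing_inv_mul _ ((A'.isUnit_iff_isUnit_det).mp hA'),
      Matrix.one_mul]
  rw [Matrix.sub_mul, Matrix.mul_sub, Matrix.mul_sub, hA'A, hA'A']
  abel

theorem first_order_error_bound_general {m n : ℕ}
    (A A' : Matrix (Fin m) (Fin m) ℝ) (B B' : Matrix (Fin m) (Fin n) ℝ)
    (δ γ β R α₁ α₂ : ℝ)
    (hα₁ : 0 < α₁) (hα₂ : 0 < α₂)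
    (hAop : l2OpNorm (A' - A) ≤ γ * δ)
    (hBF : frobNorm (B' - B) ≤ β * δ)
    (hB : frobNorm B ≤ R)
    (hA'lb : ∀ v : Fin m → ℝ, α₁ * euclNorm v ≤ euclNorm (A'.mulVec v))
    (hAlb : ∀ v : Fin m → ℝ, α₂ * euclNorm v ≤ euclNorm (A.mulVec v)) :
    IsUnit A' ∧ IsUnit A ∧
      frobNorm (A'⁻¹ * B' - A⁻¹ * B) ≤ (β / α₁) * δ + (γ * R / (α₁ * α₂)) * δ := by
  have hA' := isUnit_of_mul_euclNorm_le_euclNorm_mulVec hα₁ hA'lb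
  have hA := isUnit_of_mul_euclNorm_le_euclNorm_mulVec hα₂ hAlb
  have hA'inv : ∀ M : Matrix (Fin m) (Fin n) ℝ, frobNorm (A'⁻¹ * M) ≤ α₁⁻¹ * frobNorm M :=
    frobNorm_mul_le_of_euclNorm_mulVec_le (inv_nonneg.mpr hα₁.le)
      (euclNorm_inv_mulVec_le hα₁ hA'lb)
  have hAinvB : frobNorm (A⁻¹ * B) ≤ α₂⁻¹ * R :=
    (frobNorm_mul_le_of_euclNorm_mulVec_le (inv_nonneg.mpr hα₂.le)
      (euclNorm_inv_mulVec_le hα₂ hAlb) B).trans (by gcongr)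
  have hdiff : frobNorm ((A - A') * (A⁻¹ * B)) ≤ γ * δ * (α₂⁻¹ * R) := by
    refine (frobNorm_mul_le_of_euclNorm_mulVec_le (l2OpNorm_nonneg _)
      (euclNorm_mulVec_le_l2OpNorm_mul _) _).trans ?_
    rw [l2OpNorm_sub_comm]
    exact mul_le_mul hAop hAinvB (frobNorm_nonneg _) ((l2OpNorm_nonneg _).trans hAop)
  refine ⟨hA', hA, ?_⟩
  calc frobNorm (A'⁻¹ * B' - A⁻¹ * B)
      ≤ α₁⁻¹ * frobNorm (B' - B) + α₁⁻¹ * frobNorm ((A - A') * (A⁻¹ * B)) := by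
        rw [Matrix.inv_mul_sub_inv_mul hA hA']
        exact (frobNorm_add_le _ _).trans (add_le_add (hA'inv _) (hA'inv _))
    _ ≤ α₁⁻¹ * (β * δ) + α₁⁻¹ * (γ * δ * (α₂⁻¹ * R)) := by gcongr
    _ = (β / α₁) * δ + (γ * R / (α₁ * α₂)) * δ := by field_simp

/-- **First-Order Error Bound (Theorem 3 of the paper).** -/
theorem first_order_error_bound {m n : ℕ}
    (A A' : Matrix (Fin m) (Fin m) ℝ) (B B' : Matrix (Fin m) (Fin n) ℝ)
    (δ γ β R α₁ α₂ : ℝ)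
    (hδ : 0 ≤ δ) (hγ : 0 ≤ γ) (hβ : 0 ≤ β) (hR : 0 ≤ R)
    (hα₁ : 0 < α₁) (hα₂ : 0 < α₂)
    (hAop : l2OpNorm (A' - A) ≤ γ * δ)
    (hBF : frobNorm (B' - B) ≤ β * δ)
    (hB : frobNorm B ≤ R)
    (hA'lb : ∀ v : Fin m → ℝ, α₁ * euclNorm v ≤ euclNorm (A'.mulVec v))
    (hAlb : ∀ v : Fin m → ℝ, α₂ * euclNorm v ≤ euclNorm (A.mulVec v)) :
    IsUnit A' ∧ IsUnit A ∧
      frobNorm (A'⁻¹ * B' - A⁻¹ * B) ≤ (β / α₁) * δ + (γ * R / (α₁ * α₂)) * δ :=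
  first_order_error_bound_general A A' B B' δ γ β R α₁ α₂ hα₁ hα₂ hAop hBF hB hA'lb hAlb
end
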